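/- Let T ⊂ ℝ^d and suppose the Bernstein inequality ‖∇P‖_{L^∞(T)} ≤ C₁ ‖P‖_{L^∞(T)} |T|^{-1/d} holds for polynomials P of degree ≤ m on T. Let a : T → ℝ satisfy 0 < a(x) ≤ M on T and let P be a polynomial of degree ≤ m with M₀ := ‖P‖_{L^∞(T)} attained at x₀ with P(x₀) = M₀ ≥ C·M for some C ≥ 4. Then, with T₀ := {x ∈ T : |x - x₀| ≤ |T|^{1/d}/(2C₁)}, one has |a(x) - P(x)| ≥ M₀/4 for all x ∈ T₀, and hence M₀ |T₀|^{1/q} ≤ 4 ‖a - P‖_{L^q(T)} for every 1 ≤ q < ∞. -/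

import Mathlib

/-!
Bernstein's inequality bounds the gradient of `P` on the convex set `T` by
`C₁ M₀ |T|^{-1/d}`, so by the mean value theorem `P` stays within `M₀/2` of its maximum
`P(x₀) = M₀` on the ball `T₀` of radius `|T|^{1/d}/(2C₁)` around `x₀`. There `P ≥ M₀/2`
while `a ≤ M ≤ M₀/4`, so `|a - P| ≥ M₀/4` on `T₀`; comparing `a - P` with `M₀/4` times the
indicator of `T₀` gives the `L^q` bound.
-/

open MeasureTheory
open scoped ENNReal

/-- Evaluation of a multivariate polynomial at a point of `ℝ^d`. -/
noncomputable def polyEval {d : ℕ} (P : MvPolynomial (Fin d) ℝ)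
    (x : EuclideanSpace ℝ (Fin d)) : ℝ :=
  MvPolynomial.eval (fun i => x i) P

theorem differentiable_polyEval {d : ℕ} (P : MvPolynomial (Fin d) ℝ) :
    Differentiable ℝ (polyEval P) := fun x =>
  (AnalyticOnNhd.eval_continuousLinearMap' (𝕜 := ℝ)
    (fun i : Fin d => EuclideanSpace.proj (𝕜 := ℝ) i) P x trivial).differentiableAt

theorem Convex.abs_sub_le_half_of_norm_fderiv_le {E : Type*} [NormedAddCommGroup E]
    [NormedSpace ℝ E] {f : E → ℝ} {s : Set E} (hs : Convex ℝ s) (hf : Differentiable ℝ f)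
    {c B h : ℝ} (hB : 0 ≤ B) (hbound : ∀ x ∈ s, ‖fderiv ℝ f x‖ ≤ c * B * h⁻¹)
    {x y : E} (hx : x ∈ s) (hy : y ∈ s) (hxy : ‖y - x‖ ≤ h / (2 * c)) :
    |f y - f x| ≤ B / 2 := by
  have hK : 0 ≤ c * B * h⁻¹ := (norm_nonneg _).trans (hbound x hx)
  calc |f y - f x| ≤ c * B * h⁻¹ * ‖y - x‖ :=
        hs.norm_image_sub_le_of_norm_fderiv_le (fun z _ => hf z) hbound hx hy
    _ ≤ c * B * h⁻¹ * (h / (2 * c)) := mul_le_mul_of_nonneg_left hxy hK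
    _ = B / 2 * ((c * h) / (c * h)) := by ring
    _ ≤ B / 2 := mul_le_of_le_one_right (by positivity) (div_self_le_one _)

theorem Convex.nullMeasurableSet_sep_norm_sub_le {E : Type*} [NormedAddCommGroup E]
    [NormedSpace ℝ E] [MeasurableSpace E] [BorelSpace E] [FiniteDimensional ℝ E]
    (μ : Measure E) [μ.IsAddHaarMeasure] {s : Set E} (hs : Convex ℝ s) (x₀ : E) (r : ℝ) :
    NullMeasurableSet {x ∈ s | ‖x - x₀‖ ≤ r} (μ.restrict s) :=
  have hball : MeasurableSet {x | ‖x - x₀‖ ≤ r} :=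
    measurableSet_le (by fun_prop) measurable_const
  ((hs.nullMeasurableSet μ).inter hball.nullMeasurableSet).mono Measure.restrict_le_self

theorem ofReal_mul_measure_rpow_le_eLpNorm {α F : Type*} [MeasurableSpace α]
    [NormedAddCommGroup F] {μ : Measure α} {s : Set α} (hs : NullMeasurableSet s μ)
    {f : α → F} {c : ℝ} (hc : 0 ≤ c) (hf : ∀ x ∈ s, c ≤ ‖f x‖) {p : ℝ≥0∞} (hp : p ≠ 0)
    (hp_top : p ≠ ∞) :
    ENNReal.ofReal c * μ s ^ (1 / p.toReal) ≤ eLpNorm f p μ := by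
  rw [← Real.enorm_eq_ofReal hc, ← eLpNorm_indicator_const₀ hs hp hp_top]
  refine eLpNorm_mono fun x => ?_
  by_cases hx : x ∈ s
  · simpa [hx, abs_of_nonneg hc] using hf x hx
  · simp [hx]

theorem bernstein_lower_bound_general
    {d : ℕ} (T : Set (EuclideanSpace ℝ (Fin d)))
    (hTconv : Convex ℝ T)
    (m : ℕ) (C₁ : ℝ)
    (hBern : ∀ Q : MvPolynomial (Fin d) ℝ, Q.totalDegree ≤ m →
      ∀ B : ℝ, (∀ y ∈ T, |polyEval Q y| ≤ B) →
      ∀ x ∈ T, ‖fderiv ℝ (polyEval Q) x‖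
        ≤ C₁ * B * (volume T).toReal ^ (-(1 / (d : ℝ))))
    (M : ℝ) (a : EuclideanSpace ℝ (Fin d) → ℝ)
    (ha : ∀ x ∈ T, 0 < a x ∧ a x ≤ M)
    (P : MvPolynomial (Fin d) ℝ) (hP : P.totalDegree ≤ m)
    (M₀ : ℝ) (x₀ : EuclideanSpace ℝ (Fin d)) (hx₀ : x₀ ∈ T)
    (hM₀sup : ∀ x ∈ T, |polyEval P x| ≤ M₀) (hM₀att : polyEval P x₀ = M₀)
    (C : ℝ) (hC : 4 ≤ C) (hCM : C * M ≤ M₀) :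
    (∀ x ∈ {x ∈ T | ‖x - x₀‖ ≤ (volume T).toReal ^ (1 / (d : ℝ)) / (2 * C₁)},
        M₀ / 4 ≤ |a x - polyEval P x|) ∧
      ∀ q : ℝ, 1 ≤ q →
        ENNReal.ofReal M₀ *
            volume {x ∈ T | ‖x - x₀‖ ≤ (volume T).toReal ^ (1 / (d : ℝ)) / (2 * C₁)}
              ^ (1 / q)
          ≤ 4 * eLpNorm (fun x => a x - polyEval P x) (ENNReal.ofReal q)
              (volume.restrict T) := by
  set r := (volume T).toReal ^ (1 / (d : ℝ)) / (2 * C₁)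
  set T₀ := {x ∈ T | ‖x - x₀‖ ≤ r}
  have hM₀ : 0 ≤ M₀ := (abs_nonneg _).trans (hM₀sup x₀ hx₀)
  have haM₀ : ∀ x ∈ T, a x ≤ M₀ / 4 := fun x hx => by nlinarith [ha x hx, ha x₀ hx₀]
  have hgrad : ∀ x ∈ T, ‖fderiv ℝ (polyEval P) x‖
      ≤ C₁ * M₀ * ((volume T).toReal ^ (1 / (d : ℝ)))⁻¹ := by
    simpa only [Real.rpow_neg ENNReal.toReal_nonneg] using hBern P hP M₀ hM₀sup
  have hpoint : ∀ x ∈ T₀, M₀ / 4 ≤ |a x - polyEval P x| := by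
    rintro x ⟨hxT, hxr⟩
    have hclose := hTconv.abs_sub_le_half_of_norm_fderiv_le (differentiable_polyEval P) hM₀
      hgrad hx₀ hxT hxr
    rw [hM₀att] at hclose
    exact le_abs.mpr (Or.inr (by linarith [(abs_le.mp hclose).1, haM₀ x hxT]))
  refine ⟨hpoint, fun q hq => ?_⟩
  have hLq := ofReal_mul_measure_rpow_le_eLpNorm (f := fun x => a x - polyEval P x)
    (hTconv.nullMeasurableSet_sep_norm_sub_le volume x₀ r) (by positivity : 0 ≤ M₀ / 4) hpoint
    (by simpa using zero_lt_one.trans_le hq) ENNReal.ofReal_ne_top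
  rw [Measure.restrict_eq_self _ (Set.sep_subset _ _),
    ENNReal.toReal_ofReal (zero_le_one.trans hq)] at hLq
  calc ENNReal.ofReal M₀ * volume T₀ ^ (1 / q)
      = 4 * (ENNReal.ofReal (M₀ / 4) * volume T₀ ^ (1 / q)) := by
        rw [ENNReal.ofReal_div_of_pos four_pos, ← mul_assoc, ENNReal.ofReal_ofNat,
          ENNReal.mul_div_cancel (by norm_num) (by norm_num)]
    _ ≤ _ := by gcongr

/-- **Key step of Proposition 3 (enforcing positive definiteness locally).**
Assume the Bernstein inequality `‖∇Q‖_{L^∞(T)} ≤ C₁ B |T|^{-1/d}` for all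
polynomials `Q` of degree `≤ m` on the convex cell `T` (with `B` any bound for
`‖Q‖_{L^∞(T)}`).  Let `0 < a ≤ M` on `T`, and let `P` be a polynomial of
degree `≤ m` with `M₀ = ‖P‖_{L^∞(T)}` attained at `x₀ ∈ T`, `P(x₀) = M₀ ≥ C·M`
for some `C ≥ 4`.  Then, with `T₀ = {x ∈ T : |x - x₀| ≤ |T|^{1/d}/(2C₁)}`,
`|a(x) - P(x)| ≥ M₀/4` on `T₀`, hence `M₀|T₀|^{1/q} ≤ 4‖a - P‖_{L^q(T)}` for
every `1 ≤ q < ∞`. -/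
theorem bernstein_lower_bound
    {d : ℕ} (hd : 0 < d) (T : Set (EuclideanSpace ℝ (Fin d)))
    (hTconv : Convex ℝ T) (hTvol : 0 < (volume T).toReal)
    (m : ℕ) (C₁ : ℝ) (hC₁ : 0 < C₁)
    (hBern : ∀ Q : MvPolynomial (Fin d) ℝ, Q.totalDegree ≤ m →
      ∀ B : ℝ, (∀ y ∈ T, |polyEval Q y| ≤ B) →
      ∀ x ∈ T, ‖fderiv ℝ (polyEval Q) x‖
        ≤ C₁ * B * (volume T).toReal ^ (-(1 / (d : ℝ))))
    (M : ℝ) (a : EuclideanSpace ℝ (Fin d) → ℝ)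
    (ha : ∀ x ∈ T, 0 < a x ∧ a x ≤ M)
    (P : MvPolynomial (Fin d) ℝ) (hP : P.totalDegree ≤ m)
    (M₀ : ℝ) (x₀ : EuclideanSpace ℝ (Fin d)) (hx₀ : x₀ ∈ T)
    (hM₀sup : ∀ x ∈ T, |polyEval P x| ≤ M₀) (hM₀att : polyEval P x₀ = M₀)
    (C : ℝ) (hC : 4 ≤ C) (hCM : C * M ≤ M₀) :
    (∀ x ∈ {x ∈ T | ‖x - x₀‖ ≤ (volume T).toReal ^ (1 / (d : ℝ)) / (2 * C₁)},
        M₀ / 4 ≤ |a x - polyEval P x|) ∧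
      ∀ q : ℝ, 1 ≤ q →
        ENNReal.ofReal M₀ *
            volume {x ∈ T | ‖x - x₀‖ ≤ (volume T).toReal ^ (1 / (d : ℝ)) / (2 * C₁)}
              ^ (1 / q)
          ≤ 4 * eLpNorm (fun x => a x - polyEval P x) (ENNReal.ofReal q)
              (volume.restrict T) :=
  bernstein_lower_bound_general T hTconv m C₁ hBern M a ha P hP M₀ x₀ hx₀ hM₀sup hM₀att C hC hCM
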